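/- Let X : Ω₁ → Ω₂ be a C² diffeomorphism between bounded open subsets of ℝⁿ, A(x) := |det DX(x)| (DX(x))⁻¹ (DX(x))⁻ᵀ, κ > 0, σ ≥ 0, and u ∈ C²(Ω₁) ∩ H²(Ω₁). Then ∫_{Ω₂} κ (Δ(u∘X⁻¹))² + σ |∇(u∘X⁻¹)|² dx = ∫_{Ω₁} κ (div(A∇u))² / |det DX| + σ (∇u)ᵀ A ∇u dx. -/

import Mathlib

/-!
Write `v = u ∘ X⁻¹` and `J = DX`. The chain rule gives `∇u = Jᵀ (∇v ∘ X)`, hence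
`(∇u)ᵀ A ∇u = |det J| |∇v ∘ X|²` and `A ∇u = sign (det J) • adj J (∇v ∘ X)`. By the Piola identity
(the columns of `adj J` are divergence free, by Jacobi's formula for the derivative of a
determinant and the symmetry of second derivatives of `X`), `div (adj J (∇v ∘ X)) = det J (Δv ∘ X)`.
So the right-hand integrand at `x` is `|det J x|` times the left-hand integrand at `X x`, and the
change of variables formula concludes.
-/

open Matrix MeasureTheory

section DeterminantCalculus

variable {E : Type*} [NormedAddCommGroup E] [NormedSpace ℝ E]
  {ι : Type*} [Fintype ι] [DecidableEq ι]

noncomputable def Matrix.detRowContinuous : ContinuousMultilinearMap ℝ (fun _ : ι => ι → ℝ) ℝ :=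
  { (Matrix.detRowAlternating : (ι → ℝ) [⋀^ι]→ₗ[ℝ] ℝ).toMultilinearMap with
    cont := continuous_id.matrix_det }

theorem Matrix.hasFDerivAt_det {M : E → Matrix ι ι ℝ} {x : E}
    (h : ∀ p q, DifferentiableAt ℝ (fun z => M z p q) x) :
    HasFDerivAt (fun z => (M z).det)
      (∑ k, (detRowContinuous.toContinuousLinearMap (fun k p => M x p k) k).comp
        (.pi fun p => fderiv ℝ (fun z => M z p k) x)) x := by
  have hdet : (fun z => (M z).det) = fun z => detRowContinuous fun k p => M z p k :=
    funext fun z => (det_transpose (M z)).symm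
  rw [hdet]
  exact HasFDerivAt.multilinear_comp detRowContinuous fun k =>
    hasFDerivAt_pi.2 fun p => (h p k).hasFDerivAt

theorem Matrix.differentiableAt_det {M : E → Matrix ι ι ℝ} {x : E}
    (h : ∀ p q, DifferentiableAt ℝ (fun z => M z p q) x) :
    DifferentiableAt ℝ (fun z => (M z).det) x :=
  (hasFDerivAt_det h).differentiableAt

theorem Matrix.fderiv_det_apply {M : E → Matrix ι ι ℝ} {x : E}
    (h : ∀ p q, DifferentiableAt ℝ (fun z => M z p q) x) (v : E) :
    fderiv ℝ (fun z => (M z).det) x v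
      = ∑ k, ((M x).updateCol k fun p => fderiv ℝ (fun z => M z p k) x v).det := by
  rw [(hasFDerivAt_det h).fderiv]
  simp only [_root_.sum_apply, ContinuousLinearMap.comp_apply,
    ContinuousMultilinearMap.toContinuousLinearMap_apply]
  refine Finset.sum_congr rfl fun k _ => ?_
  rw [← det_transpose, ← updateRow_transpose]
  rfl

theorem Matrix.adjugate_apply_eq_det_updateCol {R : Type*} [CommRing R] (A : Matrix ι ι R)
    (i j : ι) : A.adjugate i j = (A.updateCol i (Pi.single j 1)).det := by
  rw [← transpose_apply A.adjugate, adjugate_transpose, adjugate_apply, ← det_transpose,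
    updateRow_transpose, transpose_transpose]

theorem Matrix.fun_updateCol_apply {α m n R : Type*} [DecidableEq n] (M : α → Matrix m n R)
    (i : n) (c : m → R) (p : m) (q : n) :
    (fun z => (M z).updateCol i c p q) = if q = i then fun _ => c p else fun z => M z p q := by
  split_ifs with hq <;> simp [hq]

theorem Matrix.differentiableAt_updateCol_apply {m n : Type*} [DecidableEq n]
    {M : E → Matrix m n ℝ} {x : E} (h : ∀ p q, DifferentiableAt ℝ (fun z => M z p q) x) (i : n)
    (c : m → ℝ) (p : m) (q : n) :
    DifferentiableAt ℝ (fun z => (M z).updateCol i c p q) x := by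
  rw [fun_updateCol_apply]
  split_ifs
  exacts [differentiableAt_const _, h p q]

theorem Matrix.differentiableAt_adjugate_apply {M : E → Matrix ι ι ℝ} {x : E}
    (h : ∀ p q, DifferentiableAt ℝ (fun z => M z p q) x) (i j : ι) :
    DifferentiableAt ℝ (fun z => (M z).adjugate i j) x := by
  simp only [adjugate_apply_eq_det_updateCol]
  exact differentiableAt_det (differentiableAt_updateCol_apply h i _)

theorem Matrix.det_updateCol_updateCol_swap {R : Type*} [CommRing R] (N : Matrix ι ι R)
    {i k : ι} (hik : i ≠ k) (a b : ι → R) :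
    ((N.updateCol k a).updateCol i b).det = -((N.updateCol i a).updateCol k b).det := by
  have hswap : (N.updateCol k a).updateCol i b
      = ((N.updateCol i a).updateCol k b).submatrix id (Equiv.swap i k) := by
    ext p q
    rcases eq_or_ne q i with rfl | hqi
    · simp
    rcases eq_or_ne q k with rfl | hqk
    · simp [hik, hqi]
    · simp [Equiv.swap_apply_of_ne_of_ne hqi hqk, hqi, hqk]
  rw [hswap, det_permute', Equiv.Perm.sign_swap hik]
  simp

/-- The Piola identity; for `M = DX`, `hsymm` is the symmetry of the second derivatives of `X`. -/
theorem Matrix.sum_fderiv_adjugate_eq_zero {M : E → Matrix ι ι ℝ} {x : E}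
    (h : ∀ p q, DifferentiableAt ℝ (fun z => M z p q) x) (e : ι → E)
    (hsymm : ∀ p q i, fderiv ℝ (fun z => M z p q) x (e i) = fderiv ℝ (fun z => M z p i) x (e q))
    (j : ι) : ∑ i, fderiv ℝ (fun z => (M z).adjugate i j) x (e i) = 0 := by
  -- `T i k` is the `k`-th term of Jacobi's formula for `∂ᵢ (adj M)ᵢⱼ`; it is antisymmetric
  -- because of the symmetry of mixed derivatives.
  set T : ι → ι → ℝ := fun i k => (((M x).updateCol i (Pi.single j 1)).updateCol k
    fun p => if k = i then 0 else fderiv ℝ (fun z => M z p k) x (e i)).det with hT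
  have hexpand : ∀ i, fderiv ℝ (fun z => (M z).adjugate i j) x (e i) = ∑ k, T i k := by
    intro i
    simp only [adjugate_apply_eq_det_updateCol]
    rw [fderiv_det_apply (differentiableAt_updateCol_apply h i _)]
    refine Finset.sum_congr rfl fun k _ => ?_
    simp only [hT, fun_updateCol_apply]
    split_ifs <;> simp
  have hanti : ∀ i k, T k i = -T i k := by
    intro i k
    rcases eq_or_ne i k with rfl | hik
    · have : T i i = 0 := det_eq_zero_of_column_eq_zero i fun p => by simp
      simp [this]
    · simp only [hT, if_neg hik, if_neg hik.symm, fun p => hsymm p i k]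
      exact det_updateCol_updateCol_swap _ hik _ _
  have hsum : ∑ i, ∑ k, T i k = -∑ i, ∑ k, T i k :=
    calc ∑ i, ∑ k, T i k = ∑ k, ∑ i, T i k := Finset.sum_comm
      _ = ∑ k, ∑ i, -T k i :=
        Finset.sum_congr rfl fun k _ => Finset.sum_congr rfl fun i _ => hanti k i
      _ = -∑ i, ∑ k, T i k := by simp only [Finset.sum_neg_distrib]
  simp only [hexpand]
  linarith

end DeterminantCalculus

section PiolaMatrix

variable {ι : Type*} [Fintype ι] [DecidableEq ι]

theorem Matrix.transpose_mulVec_vecMul_adjugate {R : Type*} [CommRing R] (J : Matrix ι ι R)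
    (w : ι → R) : (Jᵀ *ᵥ w) ᵥ* J.adjugate = J.det • w := by
  rw [mulVec_transpose, vecMul_vecMul, mul_adjugate, vecMul_smul, vecMul_one]

theorem Matrix.abs_det_smul_inv (J : Matrix ι ι ℝ) :
    |J.det| • J⁻¹ = (SignType.sign J.det : ℝ) • J.adjugate := by
  rw [inv_def, smul_smul, Ring.inverse_eq_inv']
  rcases eq_or_ne J.det 0 with h | h
  · simp [h]
  · rw [← sign_mul_self, mul_assoc, mul_inv_cancel₀ h, mul_one]

/-- The coefficient matrix `A` of the transformed energy, for `J = DX`. -/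
noncomputable def piolaMatrix (J : Matrix ι ι ℝ) : Matrix ι ι ℝ := |J.det| • (J⁻¹ * J⁻¹ᵀ)

theorem piolaMatrix_mulVec_transpose_mulVec (J : Matrix ι ι ℝ) (w : ι → ℝ) :
    piolaMatrix J *ᵥ (Jᵀ *ᵥ w) = (SignType.sign J.det : ℝ) • (J.adjugate *ᵥ w) := by
  rcases eq_or_ne J.det 0 with h | h
  · simp [piolaMatrix, h]
  have hinvT : J⁻¹ᵀ * Jᵀ = 1 := by
    rw [← transpose_mul, mul_nonsing_inv J (isUnit_iff_ne_zero.2 h), transpose_one]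
  rw [piolaMatrix, smul_mulVec, mulVec_mulVec, mul_assoc, hinvT, mul_one,
    ← smul_mulVec, abs_det_smul_inv, smul_mulVec]

theorem transpose_mulVec_dotProduct_piolaMatrix_mulVec (J : Matrix ι ι ℝ) (w : ι → ℝ) :
    (Jᵀ *ᵥ w) ⬝ᵥ (piolaMatrix J *ᵥ (Jᵀ *ᵥ w)) = |J.det| * (w ⬝ᵥ w) := by
  rw [piolaMatrix_mulVec_transpose_mulVec, dotProduct_smul, mulVec_transpose, ← dotProduct_mulVec,
    mulVec_mulVec, mul_adjugate, smul_mulVec, one_mulVec, dotProduct_smul, smul_eq_mul,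
    smul_eq_mul, ← mul_assoc, sign_mul_self]

end PiolaMatrix

theorem eventually_sign_eq {E : Type*} [TopologicalSpace E] {f : E → ℝ} {x : E}
    (hf : ContinuousAt f x) (h0 : f x ≠ 0) :
    ∀ᶠ z in nhds x, SignType.sign (f z) = SignType.sign (f x) :=
  ((continuousAt_sign_of_ne_zero h0).comp hf) (isOpen_discrete {_} |>.mem_nhds rfl)

section Coordinates

variable {ι : Type*} [DecidableEq ι]

noncomputable def partialDerivs (f : EuclideanSpace ℝ ι → ℝ) (x : EuclideanSpace ℝ ι) (j : ι) : ℝ :=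
  fderiv ℝ f x (EuclideanSpace.single j 1)

noncomputable def jacobian (f : EuclideanSpace ℝ ι → EuclideanSpace ℝ ι) (x : EuclideanSpace ℝ ι) :
    Matrix ι ι ℝ :=
  Matrix.of fun i j => fderiv ℝ f x (EuclideanSpace.single j 1) i

theorem Filter.EventuallyEq.partialDerivs_eq {f g : EuclideanSpace ℝ ι → ℝ}
    {x : EuclideanSpace ℝ ι} (h : f =ᶠ[nhds x] g) : partialDerivs f x = partialDerivs g x :=
  funext fun j => by rw [partialDerivs, partialDerivs, h.fderiv_eq]

variable [Fintype ι]

noncomputable def divergence (F : EuclideanSpace ℝ ι → ι → ℝ) (x : EuclideanSpace ℝ ι) : ℝ :=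
  ∑ i, fderiv ℝ (fun z => F z i) x (EuclideanSpace.single i 1)

theorem EuclideanSpace.map_eq_sum_single {F : Type*} [NormedAddCommGroup F] [NormedSpace ℝ F]
    (L : EuclideanSpace ℝ ι →L[ℝ] F) (w : EuclideanSpace ℝ ι) :
    L w = ∑ k, w k • L (EuclideanSpace.single k 1) := by
  conv_lhs => rw [← (EuclideanSpace.basisFun ι ℝ).sum_repr w]
  simp

theorem norm_gradient_sq (f : EuclideanSpace ℝ ι → ℝ) (y : EuclideanSpace ℝ ι) :
    ‖gradient f y‖ ^ 2 = partialDerivs f y ⬝ᵥ partialDerivs f y := by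
  have hcoord : ∀ i, gradient f y i = partialDerivs f y i := fun i => by
    rw [partialDerivs, gradient, ← InnerProductSpace.toDual_symm_apply, real_inner_comm,
      EuclideanSpace.inner_single_left]
    simp
  rw [EuclideanSpace.real_norm_sq_eq]
  simp [dotProduct, hcoord, sq]

theorem partialDerivs_comp {g : EuclideanSpace ℝ ι → ℝ}
    {f : EuclideanSpace ℝ ι → EuclideanSpace ℝ ι} {x : EuclideanSpace ℝ ι}
    (hg : DifferentiableAt ℝ g (f x)) (hf : DifferentiableAt ℝ f x) :
    partialDerivs (g ∘ f) x = (jacobian f x)ᵀ *ᵥ partialDerivs g (f x) := by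
  funext i
  rw [partialDerivs, fderiv_comp x hg hf, ContinuousLinearMap.comp_apply,
    EuclideanSpace.map_eq_sum_single (fderiv ℝ g (f x))]
  simp [mulVec, dotProduct, jacobian, partialDerivs]

theorem jacobian_eq_toMatrix (f : EuclideanSpace ℝ ι → EuclideanSpace ℝ ι)
    (x : EuclideanSpace ℝ ι) :
    jacobian f x = LinearMap.toMatrix (EuclideanSpace.basisFun ι ℝ).toBasis
      (EuclideanSpace.basisFun ι ℝ).toBasis (fderiv ℝ f x) := by
  ext p q
  simp [jacobian, LinearMap.toMatrix_apply]

theorem det_jacobian (f : EuclideanSpace ℝ ι → EuclideanSpace ℝ ι) (x : EuclideanSpace ℝ ι) :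
    (jacobian f x).det = (fderiv ℝ f x).det := by
  rw [jacobian_eq_toMatrix, LinearMap.det_toMatrix]

theorem det_jacobian_ne_zero_of_leftInverse {f g : EuclideanSpace ℝ ι → EuclideanSpace ℝ ι}
    {x : EuclideanSpace ℝ ι} (hg : DifferentiableAt ℝ g (f x)) (hf : DifferentiableAt ℝ f x)
    (hgf : g ∘ f =ᶠ[nhds x] id) : (jacobian f x).det ≠ 0 := by
  have hcomp : (fderiv ℝ g (f x)).comp (fderiv ℝ f x) = ContinuousLinearMap.id ℝ _ := by
    rw [← fderiv_comp x hg hf, hgf.fderiv_eq, fderiv_id]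
  have hdet : (fderiv ℝ g (f x)).det * (fderiv ℝ f x).det = 1 := by
    rw [ContinuousLinearMap.det, ContinuousLinearMap.det, ← LinearMap.det_comp,
      ← ContinuousLinearMap.toLinearMap_comp, hcomp, ContinuousLinearMap.coe_id, LinearMap.det_id]
  rw [det_jacobian]
  exact right_ne_zero_of_mul_eq_one hdet

theorem hasFDerivAt_jacobian_apply {f : EuclideanSpace ℝ ι → EuclideanSpace ℝ ι}
    {x : EuclideanSpace ℝ ι} (hf : ContDiffAt ℝ 2 f x) (p q : ι) :
    HasFDerivAt (fun z => jacobian f z p q)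
      ((EuclideanSpace.proj p).comp
        ((fderiv ℝ (fderiv ℝ f) x).flip (EuclideanSpace.single q 1))) x := by
  have hD : DifferentiableAt ℝ (fderiv ℝ f) x :=
    (hf.fderiv_right (m := 1) le_rfl).differentiableAt one_ne_zero
  have hcol := hD.hasFDerivAt.clm_apply (hasFDerivAt_const (EuclideanSpace.single q (1 : ℝ)) x)
  refine ((EuclideanSpace.proj p : EuclideanSpace ℝ ι →L[ℝ] ℝ).hasFDerivAt.comp x hcol).congr_fderiv
    ?_
  ext w
  simp

theorem fderiv_jacobian_apply_comm {f : EuclideanSpace ℝ ι → EuclideanSpace ℝ ι}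
    {x : EuclideanSpace ℝ ι} (hf : ContDiffAt ℝ 2 f x) (p q i : ι) :
    fderiv ℝ (fun z => jacobian f z p q) x (EuclideanSpace.single i 1)
      = fderiv ℝ (fun z => jacobian f z p i) x (EuclideanSpace.single q 1) := by
  simp only [(hasFDerivAt_jacobian_apply hf _ _).fderiv, ContinuousLinearMap.comp_apply,
    ContinuousLinearMap.flip_apply, hf.isSymmSndFDerivAt (by simp) (EuclideanSpace.single i 1)]

theorem differentiableAt_partialDerivs {v : EuclideanSpace ℝ ι → ℝ} {y : EuclideanSpace ℝ ι}
    (hv : ContDiffAt ℝ 2 v y) : DifferentiableAt ℝ (partialDerivs v) y :=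
  differentiableAt_pi.2 fun _ =>
    ((hv.fderiv_right (m := 1) le_rfl).differentiableAt one_ne_zero).clm_apply
      (differentiableAt_const _)

theorem divergence_congr {F G : EuclideanSpace ℝ ι → ι → ℝ} {x : EuclideanSpace ℝ ι}
    (h : F =ᶠ[nhds x] G) : divergence F x = divergence G x :=
  Finset.sum_congr rfl fun i _ => by
    rw [Filter.EventuallyEq.fderiv_eq (h.mono fun z hz => congrFun hz i)]

theorem divergence_const_smul (c : ℝ) (F : EuclideanSpace ℝ ι → ι → ℝ) (x : EuclideanSpace ℝ ι) :
    divergence (fun z => c • F z) x = c * divergence F x := by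
  simp only [divergence, Finset.mul_sum]
  refine Finset.sum_congr rfl fun i _ => ?_
  rw [show (fun z => (c • F z) i) = c • fun z => F z i from rfl, fderiv_const_smul_field]
  rfl

theorem divergence_adjugate_jacobian_mulVec_comp {X : EuclideanSpace ℝ ι → EuclideanSpace ℝ ι}
    {W : EuclideanSpace ℝ ι → ι → ℝ} {x : EuclideanSpace ℝ ι} (hX : ContDiffAt ℝ 2 X x)
    (hW : DifferentiableAt ℝ W (X x)) :
    divergence (fun z => (jacobian X z).adjugate *ᵥ W (X z)) x
      = (jacobian X x).det * divergence W (X x) := by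
  have hJ : ∀ p q, DifferentiableAt ℝ (fun z => jacobian X z p q) x :=
    fun p q => (hasFDerivAt_jacobian_apply hX p q).differentiableAt
  have hXd : DifferentiableAt ℝ X x := hX.differentiableAt two_ne_zero
  have hWj : ∀ j, DifferentiableAt ℝ (fun y => W y j) (X x) := differentiableAt_pi.1 hW
  have hterm : ∀ i, fderiv ℝ (fun z => ((jacobian X z).adjugate *ᵥ W (X z)) i) x
        (EuclideanSpace.single i 1)
      = ∑ j, (fderiv ℝ (fun z => (jacobian X z).adjugate i j) x (EuclideanSpace.single i 1)
          * W (X x) j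
        + (jacobian X x).adjugate i j * partialDerivs ((fun y => W y j) ∘ X) x i) := by
    intro i
    have hsum := HasFDerivAt.fun_sum (u := Finset.univ) fun j _ =>
      (differentiableAt_adjugate_apply hJ i j).hasFDerivAt.fun_mul ((hWj j).comp x hXd).hasFDerivAt
    refine (congrArg (fun L => L (EuclideanSpace.single i 1)) hsum.fderiv).trans ?_
    simp only [_root_.sum_apply, _root_.add_apply, _root_.smul_apply,
      smul_eq_mul, partialDerivs]
    refine Finset.sum_congr rfl fun j _ => by simp only [Function.comp_apply]; ring
  calc divergence (fun z => (jacobian X z).adjugate *ᵥ W (X z)) x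
      = ∑ j, ((∑ i, fderiv ℝ (fun z => (jacobian X z).adjugate i j) x (EuclideanSpace.single i 1))
            * W (X x) j
          + (((jacobian X x)ᵀ *ᵥ partialDerivs (fun y => W y j) (X x)) ᵥ*
            (jacobian X x).adjugate) j) := by
        simp only [divergence, hterm, partialDerivs_comp (hWj _) hXd, vecMul, dotProduct,
          Finset.sum_mul, ← Finset.sum_add_distrib]
        rw [Finset.sum_comm]
        exact Finset.sum_congr rfl fun j _ => Finset.sum_congr rfl fun i _ => by ring
    _ = (jacobian X x).det * divergence W (X x) := by
        simp only [sum_fderiv_adjugate_eq_zero hJ _ (fderiv_jacobian_apply_comm hX), zero_mul,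
          zero_add, transpose_mulVec_vecMul_adjugate, Pi.smul_apply, smul_eq_mul, divergence,
          Finset.mul_sum, partialDerivs]

end Coordinates

section Transformation

variable {ι : Type*} [Fintype ι] [DecidableEq ι] {X : EuclideanSpace ℝ ι → EuclideanSpace ℝ ι}
  {u v : EuclideanSpace ℝ ι → ℝ} {x : EuclideanSpace ℝ ι}

theorem partialDerivs_dotProduct_piolaMatrix_mulVec (hX : DifferentiableAt ℝ X x)
    (hv : DifferentiableAt ℝ v (X x)) (hu : u =ᶠ[nhds x] v ∘ X) :
    partialDerivs u x ⬝ᵥ piolaMatrix (jacobian X x) *ᵥ partialDerivs u x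
      = |(jacobian X x).det| * ‖gradient v (X x)‖ ^ 2 := by
  rw [hu.partialDerivs_eq, partialDerivs_comp hv hX, transpose_mulVec_dotProduct_piolaMatrix_mulVec,
    norm_gradient_sq]

theorem divergence_piolaMatrix_mulVec_partialDerivs (hX : ContDiffAt ℝ 2 X x)
    (hv : ContDiffAt ℝ 2 v (X x)) (hu : u =ᶠ[nhds x] v ∘ X) (hdet : (jacobian X x).det ≠ 0) :
    divergence (fun z => piolaMatrix (jacobian X z) *ᵥ partialDerivs u z) x
      = |(jacobian X x).det| * divergence (partialDerivs v) (X x) := by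
  -- `A ∇u = sign (det J) • adj J (∇v ∘ X)` with a locally constant sign, so only the adjugate
  -- and `∇v ∘ X` get differentiated.
  have hsign : ∀ᶠ z in nhds x,
      SignType.sign (jacobian X z).det = SignType.sign (jacobian X x).det :=
    eventually_sign_eq (differentiableAt_det fun p q =>
      (hasFDerivAt_jacobian_apply hX p q).differentiableAt).continuousAt hdet
  have hgrad : ∀ᶠ z in nhds x, partialDerivs u z = (jacobian X z)ᵀ *ᵥ partialDerivs v (X z) := by
    filter_upwards [hu.eventuallyEq_nhds, hX.eventually (by simp),
      hX.continuousAt.tendsto.eventually (hv.eventually (by simp))] with z huz hXz hvz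
    rw [huz.partialDerivs_eq,
      partialDerivs_comp (hvz.differentiableAt two_ne_zero) (hXz.differentiableAt two_ne_zero)]
  have hfield : (fun z => piolaMatrix (jacobian X z) *ᵥ partialDerivs u z) =ᶠ[nhds x]
      fun z => (SignType.sign (jacobian X x).det : ℝ) •
        ((jacobian X z).adjugate *ᵥ partialDerivs v (X z)) := by
    filter_upwards [hsign, hgrad] with z hs hg
    rw [hg, piolaMatrix_mulVec_transpose_mulVec, hs]
  rw [divergence_congr hfield, divergence_const_smul,
    divergence_adjugate_jacobian_mulVec_comp hX (differentiableAt_partialDerivs hv), ← mul_assoc,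
    sign_mul_self]

theorem helfrich_density_eq (κ σ : ℝ) {A : EuclideanSpace ℝ ι → Matrix ι ι ℝ}
    (hX : ContDiffAt ℝ 2 X x) (hv : ContDiffAt ℝ 2 v (X x)) (hu : u =ᶠ[nhds x] v ∘ X)
    (hdet : (jacobian X x).det ≠ 0) (hA : A =ᶠ[nhds x] fun z => piolaMatrix (jacobian X z)) :
    |(jacobian X x).det| * (κ * divergence (partialDerivs v) (X x) ^ 2
        + σ * ‖gradient v (X x)‖ ^ 2)
      = κ * divergence (fun z => A z *ᵥ partialDerivs u z) x ^ 2 / |(jacobian X x).det|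
        + σ * (partialDerivs u x ⬝ᵥ A x *ᵥ partialDerivs u x) := by
  rw [divergence_congr (hA.mono fun z hz => by rw [hz]), hA.eq_of_nhds,
    divergence_piolaMatrix_mulVec_partialDerivs hX hv hu hdet,
    partialDerivs_dotProduct_piolaMatrix_mulVec (hX.differentiableAt two_ne_zero)
      (hv.differentiableAt two_ne_zero) hu]
  field_simp

end Transformation

theorem helfrich_energy_transformation_general
    {n : ℕ} (Ω₁ Ω₂ : Set (EuclideanSpace ℝ (Fin n)))
    (hΩ₁ : IsOpen Ω₁) (hΩ₂ : IsOpen Ω₂)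
    (X Xinv : EuclideanSpace ℝ (Fin n) → EuclideanSpace ℝ (Fin n))
    (hX : ContDiffOn ℝ 2 X Ω₁) (hXinv : ContDiffOn ℝ 2 Xinv Ω₂)
    (hXmaps : Set.MapsTo X Ω₁ Ω₂) (hXinvmaps : Set.MapsTo Xinv Ω₂ Ω₁)
    (hleft : ∀ x ∈ Ω₁, Xinv (X x) = x) (hright : ∀ y ∈ Ω₂, X (Xinv y) = y)
    (κ σ : ℝ)
    (u : EuclideanSpace ℝ (Fin n) → ℝ) (hu : ContDiffOn ℝ 2 u Ω₁)
    (DX : EuclideanSpace ℝ (Fin n) → Matrix (Fin n) (Fin n) ℝ)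
    (hDX : ∀ x ∈ Ω₁, ∀ i j, DX x i j = fderiv ℝ X x (EuclideanSpace.single j 1) i)
    (A : EuclideanSpace ℝ (Fin n) → Matrix (Fin n) (Fin n) ℝ)
    (hA : ∀ x ∈ Ω₁, A x = |(DX x).det| • ((DX x)⁻¹ * ((DX x)⁻¹)ᵀ)) :
    (∫ y in Ω₂,
        (κ * (∑ i, fderiv ℝ (fun z => fderiv ℝ (u ∘ Xinv) z (EuclideanSpace.single i 1)) y
            (EuclideanSpace.single i 1)) ^ 2
          + σ * ‖gradient (u ∘ Xinv) y‖ ^ 2))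
      = ∫ x in Ω₁,
          (κ * (∑ i, fderiv ℝ
                (fun z => (A z).mulVec (fun j => fderiv ℝ u z (EuclideanSpace.single j 1)) i)
                x (EuclideanSpace.single i 1)) ^ 2 / |(DX x).det|
            + σ * ((fun i => fderiv ℝ u x (EuclideanSpace.single i 1)) ⬝ᵥ
                (A x).mulVec (fun j => fderiv ℝ u x (EuclideanSpace.single j 1)))) := by
  have hXat : ∀ x ∈ Ω₁, ContDiffAt ℝ 2 X x := fun x hx => hX.contDiffAt (hΩ₁.mem_nhds hx)
  have hjac : ∀ x ∈ Ω₁, DX x = jacobian X x := fun x hx => Matrix.ext (hDX x hx)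
  have hinj : Set.InjOn X Ω₁ := fun a ha b hb hab => by rw [← hleft a ha, hab, hleft b hb]
  have himg : X '' Ω₁ = Ω₂ := (Set.image_subset_iff.2 hXmaps).antisymm fun y hy =>
    ⟨Xinv y, hXinvmaps hy, hright y hy⟩
  rw [← himg, integral_image_eq_integral_abs_det_fderiv_smul volume hΩ₁.measurableSet
    (fun x hx => ((hXat x hx).differentiableAt two_ne_zero).hasFDerivAt.hasFDerivWithinAt) hinj]
  refine setIntegral_congr_fun hΩ₁.measurableSet fun x hx => ?_
  have hXinvat : ContDiffAt ℝ 2 Xinv (X x) := hXinv.contDiffAt (hΩ₂.mem_nhds (hXmaps hx))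
  have hleftx : Xinv ∘ X =ᶠ[nhds x] id := Filter.eventuallyEq_of_mem (hΩ₁.mem_nhds hx) hleft
  have hdet : (jacobian X x).det ≠ 0 := det_jacobian_ne_zero_of_leftInverse
    (hXinvat.differentiableAt two_ne_zero) ((hXat x hx).differentiableAt two_ne_zero) hleftx
  have hA' : A =ᶠ[nhds x] fun z => piolaMatrix (jacobian X z) :=
    Filter.eventuallyEq_of_mem (hΩ₁.mem_nhds hx) fun z hz => by rw [hA z hz, hjac z hz]; rfl
  rw [smul_eq_mul, ← det_jacobian, hjac x hx]
  exact helfrich_density_eq κ σ (hXat x hx)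
    ((hu.comp hXinv hXinvmaps).contDiffAt (hΩ₂.mem_nhds (hXmaps hx)))
    (hleftx.mono fun z hz => congrArg u hz.symm) hdet hA'

/-- Transformation of the linearized Canham--Helfrich energy under a `C²` diffeomorphism:
`∫_{Ω₂} κ (Δ(u∘X⁻¹))² + σ |∇(u∘X⁻¹)|² = ∫_{Ω₁} κ (div(A∇u))²/|det DX| + σ (∇u)ᵀ A ∇u`
with `A = |det DX| (DX)⁻¹ (DX)⁻ᵀ`. -/
theorem helfrich_energy_transformation
    {n : ℕ} (Ω₁ Ω₂ : Set (EuclideanSpace ℝ (Fin n)))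
    (hΩ₁ : IsOpen Ω₁) (hΩ₂ : IsOpen Ω₂)
    (hb₁ : Bornology.IsBounded Ω₁) (hb₂ : Bornology.IsBounded Ω₂)
    (X Xinv : EuclideanSpace ℝ (Fin n) → EuclideanSpace ℝ (Fin n))
    (hX : ContDiffOn ℝ 2 X Ω₁) (hXinv : ContDiffOn ℝ 2 Xinv Ω₂)
    (hXmaps : Set.MapsTo X Ω₁ Ω₂) (hXinvmaps : Set.MapsTo Xinv Ω₂ Ω₁)
    (hleft : ∀ x ∈ Ω₁, Xinv (X x) = x) (hright : ∀ y ∈ Ω₂, X (Xinv y) = y)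
    (κ σ : ℝ) (hκ : 0 < κ) (hσ : 0 ≤ σ)
    (u : EuclideanSpace ℝ (Fin n) → ℝ) (hu : ContDiffOn ℝ 2 u Ω₁)
    (DX : EuclideanSpace ℝ (Fin n) → Matrix (Fin n) (Fin n) ℝ)
    (hDX : ∀ x ∈ Ω₁, ∀ i j, DX x i j = fderiv ℝ X x (EuclideanSpace.single j 1) i)
    (A : EuclideanSpace ℝ (Fin n) → Matrix (Fin n) (Fin n) ℝ)
    (hA : ∀ x ∈ Ω₁, A x = |(DX x).det| • ((DX x)⁻¹ * ((DX x)⁻¹)ᵀ)) :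
    (∫ y in Ω₂,
        (κ * (∑ i, fderiv ℝ (fun z => fderiv ℝ (u ∘ Xinv) z (EuclideanSpace.single i 1)) y
            (EuclideanSpace.single i 1)) ^ 2
          + σ * ‖gradient (u ∘ Xinv) y‖ ^ 2))
      = ∫ x in Ω₁,
          (κ * (∑ i, fderiv ℝ
                (fun z => (A z).mulVec (fun j => fderiv ℝ u z (EuclideanSpace.single j 1)) i)
                x (EuclideanSpace.single i 1)) ^ 2 / |(DX x).det|
            + σ * ((fun i => fderiv ℝ u x (EuclideanSpace.single i 1)) ⬝ᵥ
                (A x).mulVec (fun j => fderiv ℝ u x (EuclideanSpace.single j 1)))) :=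
  helfrich_energy_transformation_general Ω₁ Ω₂ hΩ₁ hΩ₂ X Xinv hX hXinv hXmaps hXinvmaps hleft hright
    κ σ u hu DX hDX A hA
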